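/- arXiv:1305.0452 — 7 statements merged into one kernel-verified Lean document; each statement's English description precedes it below -/
import Mathlib

section
/- Let K be a {Φ∪Σ,Δ}-field and let A_1,…,A_q ∈ GL_n(K), B_1,…,B_m ∈ M_n(K), C_1,…,C_r ∈ GL_n(K) satisfy all of the integrability conditions: φ_j(A_i)A_j = φ_i(A_j)A_i for all 1 ≤ i,j ≤ q; φ_j(B_i)A_j = ∂_i(A_j) + A_jB_i for all 1 ≤ i ≤ m, 1 ≤ j ≤ q; ∂_j(B_i) − ∂_i(B_j) = [B_j,B_i] for all 1 ≤ i,j ≤ m; φ_j(C_i)A_j = σ_i(A_j)C_i for all 1 ≤ i ≤ r, 1 ≤ j ≤ q; σ_j(B_i)C_j = ∂_i(C_j) + C_jB_i for all 1 ≤ i ≤ m, 1 ≤ j ≤ r; and σ_j(C_i)C_j = σ_i(C_j)C_i for all 1 ≤ i,j ≤ r. Then there exist a {Φ∪Σ,Δ}-field extension L of K and a matrix Z ∈ GL_n(L) such that φ_j(Z) = A_jZ for all 1 ≤ j ≤ q, ∂_i(Z) = B_iZ for all 1 ≤ i ≤ m, and σ_k(Z) = C_kZ for all 1 ≤ k ≤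 r. -/
/-!
The solution field is the fraction field `F` of the polynomial ring over `K` in the entries of a
generic `n × n` matrix `Z`. Each automorphism is extended by acting on coefficients and sending
`Z ↦ A_j Z` (resp. `Z ↦ C_k Z`), each derivation by acting on coefficients and sending
`Z ↦ B_i Z`. Since `F` is generated by `K` and the entries of `Z`, two of these operators commute
as soon as they commute on `K` and on `Z`, and on `Z` this is exactly one of the integrability
conditions. `Z` is invertible because its determinant is a nonzero polynomial.

Derivations are handled through dual numbers: an `f`-derivation `d` is the same as the ring
homomorphism `x ↦ f x + d x ε`, so extending a derivation to a polynomial ring or a fraction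
field, and comparing two derivations on generators, reduce to the same questions for ring
homomorphisms.
-/

/-- A `{Φ∪Σ,Δ}`-field structure on a field `L`: commuting automorphisms
`φ_1,…,φ_q` and `σ_1,…,σ_r` together with derivations `∂_1,…,∂_m`, all of
which pairwise commute. -/
structure PhiSigmaDeltaField (q r m : ℕ) (L : Type*) [Field L] where
  φ : Fin q → L ≃+* L
  σ : Fin r → L ≃+* L
  der : Fin m → L → L
  der_add : ∀ i x y, der i (x + y) = der i x + der i y
  der_mul : ∀ i x y, der i (x * y) = der i x * y + x * der i y
  comm_φφ : ∀ i j x, φ i (φ j x) = φ j (φ i x)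
  comm_φσ : ∀ i j x, φ i (σ j x) = σ j (φ i x)
  comm_σσ : ∀ i j x, σ i (σ j x) = σ j (σ i x)
  comm_φder : ∀ i j x, φ i (der j x) = der j (φ i x)
  comm_σder : ∀ i j x, σ i (der j x) = der j (σ i x)
  comm_derder : ∀ i j x, der i (der j x) = der j (der i x)


open MvPolynomial TrivSqZeroExt

section DualNumber

variable {R S : Type*} [CommRing R] [CommRing S]

noncomputable def dualNumberHom (f : R →+* S) (d : R →+ S)
    (hd : ∀ x y, d (x * y) = f x * d y + f y * d x) : R →+* DualNumber S where
  toFun x := inl (f x) + inr (d x)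
  map_one' := by ext <;> simp [show d 1 = 0 by simpa using hd 1 1]
  map_mul' x y := by ext <;> simp [hd]; ring
  map_zero' := by ext <;> simp
  map_add' x y := by ext <;> simp

variable (f : R →+* S) (d : R →+ S) (hd : ∀ x y, d (x * y) = f x * d y + f y * d x)

@[simp]
theorem fst_dualNumberHom (x : R) : (dualNumberHom f d hd x).fst = f x := by
  simp [dualNumberHom]

@[simp]
theorem snd_dualNumberHom (x : R) : (dualNumberHom f d hd x).snd = d x := by
  simp [dualNumberHom]

end DualNumber

namespace Derivation

variable {R : Type*} [CommRing R]

noncomputable def ofDualNumberHom (g : R →+* DualNumber R) (hg : ∀ x, (g x).fst = x) :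
    Derivation ℤ R R :=
  Derivation.mk' ((sndHom R R).toAddMonoidHom.comp g.toAddMonoidHom).toIntLinearMap
    fun x y => by simp [snd_mul, hg]; ring

theorem map_matrix_mul {n : Type*} [Fintype n] (D : Derivation ℤ R R) (P Q : Matrix n n R) :
    (P * Q).map D = P.map D * Q + P * Q.map D := by
  ext i j
  simp [Matrix.mul_apply, leibniz, Finset.sum_add_distrib, mul_comm, add_comm]

variable {F : Type*} [CommRing F] [Algebra R F] [IsFractionRing R F]

noncomputable def liftFractionRing (g : R →+* DualNumber F)
    (hg : ∀ p, (g p).fst = algebraMap R F p) : Derivation ℤ F F :=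
  let G : F →+* DualNumber F := IsLocalization.lift (M := nonZeroDivisors R) (g := g) fun s => by
    rw [isUnit_iff_isUnit_fst, hg]; exact IsLocalization.map_units F s
  have hG : (fstHom F F F).toRingHom.comp G = RingHom.id F :=
    IsLocalization.ringHom_ext (nonZeroDivisors R) (RingHom.ext fun p => by
      simp [G, IsLocalization.lift_eq, hg])
  ofDualNumberHom G (RingHom.congr_fun hG)

@[simp]
theorem liftFractionRing_algebraMap (g : R →+* DualNumber F)
    (hg : ∀ p, (g p).fst = algebraMap R F p) (p : R) :
    liftFractionRing g hg (algebraMap R F p) = (g p).snd :=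
  congrArg snd (IsLocalization.lift_eq (M := nonZeroDivisors R) _ p)

end Derivation

section GenericMatrix

variable {K : Type*} [CommRing K] {n : Type*} {F : Type*} [CommRing F] [Algebra K F]
  [Algebra (MvPolynomial (n × n) K) F] [IsScalarTower K (MvPolynomial (n × n) K) F]
  [IsFractionRing (MvPolynomial (n × n) K) F]

variable (K n F) in
noncomputable def genericMatrix : Matrix n n F :=
  (Matrix.mvPolynomialX n n K).map (algebraMap _ F)

theorem genericMatrix_ringHom_ext {T : Type*} [Semiring T] {f g : F →+* T}
    (hK : ∀ a : K, f (algebraMap K F a) = g (algebraMap K F a))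
    (hZ : (genericMatrix K n F).map f = (genericMatrix K n F).map g) : f = g := by
  refine IsLocalization.ringHom_ext (nonZeroDivisors (MvPolynomial (n × n) K)) ?_
  refine MvPolynomial.ringHom_ext (fun a => ?_) fun v => congrFun (congrFun hZ v.1) v.2
  simpa [IsScalarTower.algebraMap_apply K (MvPolynomial (n × n) K) F] using hK a

theorem genericMatrix_leibniz_ext {S : Type*} [CommRing S] (f : F →+* S) {d₁ d₂ : F →+ S}
    (hd₁ : ∀ x y, d₁ (x * y) = f x * d₁ y + f y * d₁ x)
    (hd₂ : ∀ x y, d₂ (x * y) = f x * d₂ y + f y * d₂ x)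
    (hK : ∀ a : K, d₁ (algebraMap K F a) = d₂ (algebraMap K F a))
    (hZ : (genericMatrix K n F).map d₁ = (genericMatrix K n F).map d₂) : d₁ = d₂ := by
  have h := genericMatrix_ringHom_ext (K := K) (n := n)
    (f := dualNumberHom f d₁ hd₁) (g := dualNumberHom f d₂ hd₂)
    (fun a => by ext <;> simp [hK])
    (Matrix.ext fun i j => by
      have hij : d₁ (genericMatrix K n F i j) = d₂ (genericMatrix K n F i j) :=
        congrFun (congrFun hZ i) j
      ext <;> simp [hij])
  ext x
  simpa using congrArg snd (RingHom.congr_fun h x)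

theorem genericMatrix_derivation_ext {D₁ D₂ : Derivation ℤ F F}
    (hK : ∀ a : K, D₁ (algebraMap K F a) = D₂ (algebraMap K F a))
    (hZ : (genericMatrix K n F).map D₁ = (genericMatrix K n F).map D₂) : D₁ = D₂ := by
  have := genericMatrix_leibniz_ext (RingHom.id F) (d₁ := D₁) (d₂ := D₂)
    (by simp [Derivation.leibniz]) (by simp [Derivation.leibniz]) hK hZ
  exact Derivation.ext fun x => DFunLike.congr_fun this x

end GenericMatrix

theorem isUnit_genericMatrix {K : Type*} [CommRing K] [IsDomain K] {n : Type*} [Fintype n]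
    [DecidableEq n] {F : Type*} [CommRing F] [Algebra (MvPolynomial (n × n) K) F]
    [IsFractionRing (MvPolynomial (n × n) K) F] : IsUnit (genericMatrix K n F) := by
  rw [Matrix.isUnit_iff_isUnit_det, genericMatrix, ← RingHom.mapMatrix_apply, ← RingHom.map_det]
  exact IsLocalization.map_units F
    (⟨_, mem_nonZeroDivisors_of_ne_zero (Matrix.det_mvPolynomialX_ne_zero n K)⟩ :
      nonZeroDivisors (MvPolynomial (n × n) K))

section ExtendDerivation

variable {K : Type*} [CommRing K] {n : Type*} [Fintype n] {F : Type*} [CommRing F] [Algebra K F]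
  [Algebra (MvPolynomial (n × n) K) F] [IsScalarTower K (MvPolynomial (n × n) K) F]

variable (F) in
noncomputable def genericDualNumberHom (d : Derivation ℤ K K) (B : Matrix n n K) :
    MvPolynomial (n × n) K →+* DualNumber F :=
  eval₂Hom (dualNumberHom (algebraMap K F)
      ((algebraMap K F).toAddMonoidHom.comp (d : K →ₗ[ℤ] K).toAddMonoidHom)
      (by simp [Derivation.leibniz]))
    fun v => inl (genericMatrix K n F v.1 v.2) +
      inr ((B.map (algebraMap K F) * genericMatrix K n F) v.1 v.2)

theorem fst_genericDualNumberHom (d : Derivation ℤ K K) (B : Matrix n n K)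
    (p : MvPolynomial (n × n) K) :
    (genericDualNumberHom F d B p).fst = algebraMap _ F p := by
  induction p using MvPolynomial.induction_on with
  | C a => simp [genericDualNumberHom, IsScalarTower.algebraMap_apply K (MvPolynomial (n × n) K) F]
  | add p q hp hq => simp [hp, hq]
  | mul_X p v hp => rw [map_mul, fst_mul, hp]; simp [genericDualNumberHom, genericMatrix]

variable [IsFractionRing (MvPolynomial (n × n) K) F]

variable (F) in
noncomputable def extendDerivation (d : Derivation ℤ K K) (B : Matrix n n K) : Derivation ℤ F F :=
  Derivation.liftFractionRing (genericDualNumberHom F d B) (fst_genericDualNumberHom d B)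

variable (d : Derivation ℤ K K) (B : Matrix n n K)

@[simp]
theorem extendDerivation_algebraMap (a : K) :
    extendDerivation F d B (algebraMap K F a) = algebraMap K F (d a) := by
  rw [IsScalarTower.algebraMap_apply K (MvPolynomial (n × n) K) F, extendDerivation,
    Derivation.liftFractionRing_algebraMap]
  simp [genericDualNumberHom]

@[simp]
theorem map_algebraMap_map_extendDerivation (N : Matrix n n K) :
    (N.map (algebraMap K F)).map (extendDerivation F d B) = (N.map d).map (algebraMap K F) := by
  ext; simp

theorem map_genericMatrix_extendDerivation :
    (genericMatrix K n F).map (extendDerivation F d B) =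
      B.map (algebraMap K F) * genericMatrix K n F := by
  ext i j
  simp [genericMatrix, extendDerivation, genericDualNumberHom]

theorem map_genericMatrix_extendDerivation_comp (d' : Derivation ℤ K K) (B' : Matrix n n K) :
    (genericMatrix K n F).map (extendDerivation F d B ∘ extendDerivation F d' B') =
      (B'.map d + B' * B).map (algebraMap K F) * genericMatrix K n F := by
  rw [← Matrix.map_map, map_genericMatrix_extendDerivation, Derivation.map_matrix_mul,
    map_algebraMap_map_extendDerivation, map_genericMatrix_extendDerivation,
    Matrix.map_add _ (map_add _), Matrix.map_mul, add_mul, mul_assoc]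

theorem extendDerivation_comm {d₁ d₂ : Derivation ℤ K K} {B₁ B₂ : Matrix n n K}
    (hd : ∀ a, d₁ (d₂ a) = d₂ (d₁ a)) (hB : B₁.map d₂ - B₂.map d₁ = B₂ * B₁ - B₁ * B₂)
    (x : F) :
    extendDerivation F d₁ B₁ (extendDerivation F d₂ B₂ x) =
      extendDerivation F d₂ B₂ (extendDerivation F d₁ B₁ x) := by
  set D₁ := extendDerivation F d₁ B₁
  set D₂ := extendDerivation F d₂ B₂
  have hB' : B₂.map d₁ + B₂ * B₁ = B₁.map d₂ + B₁ * B₂ := by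
    rw [sub_eq_sub_iff_add_eq_add] at hB
    rw [add_comm, ← hB, add_comm]
  have hZ : (genericMatrix K n F).map ⇑(⁅D₁, D₂⁆ : Derivation ℤ F F) =
      (genericMatrix K n F).map (D₁ ∘ D₂) - (genericMatrix K n F).map (D₂ ∘ D₁) := by
    ext; simp [Derivation.commutator_apply]
  have h : ⁅D₁, D₂⁆ = 0 := by
    refine genericMatrix_derivation_ext (K := K) (n := n)
      (fun a => by simp [D₁, D₂, Derivation.commutator_apply, hd]) ?_
    rw [hZ, map_genericMatrix_extendDerivation_comp, map_genericMatrix_extendDerivation_comp, hB',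
      sub_self]
    ext; simp
  simpa [Derivation.commutator_apply, sub_eq_zero] using congrArg (· x) h

end ExtendDerivation

section Twist

variable {K : Type*} [CommRing K] {n : Type*} [Fintype n]

noncomputable def twistHom (e : K →+* K) (M : Matrix n n K) :
    MvPolynomial (n × n) K →+* MvPolynomial (n × n) K :=
  eval₂Hom (C.comp e) fun v =>
    (M.map C * Matrix.mvPolynomialX n n K : Matrix n n (MvPolynomial (n × n) K)) v.1 v.2

@[simp]
theorem twistHom_C (e : K →+* K) (M : Matrix n n K) (a : K) : twistHom e M (C a) = C (e a) :=
  eval₂Hom_C _ _ _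

theorem map_mvPolynomialX_twistHom (e : K →+* K) (M : Matrix n n K) :
    (Matrix.mvPolynomialX n n K).map (twistHom e M) = M.map C * Matrix.mvPolynomialX n n K := by
  ext i j
  simp [twistHom]

theorem twistHom_comp (e₁ e₂ : K →+* K) (M₁ M₂ : Matrix n n K) :
    (twistHom e₂ M₂).comp (twistHom e₁ M₁) = twistHom (e₂.comp e₁) (M₁.map e₂ * M₂) := by
  have h : (M₁.map C * Matrix.mvPolynomialX n n K).map (twistHom e₂ M₂) =
      (M₁.map e₂ * M₂).map C * Matrix.mvPolynomialX n n K := by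
    have hC : (M₁.map C).map (twistHom e₂ M₂) = (M₁.map e₂).map C := by ext; simp
    rw [Matrix.map_mul, map_mvPolynomialX_twistHom, hC, Matrix.map_mul, mul_assoc]
  refine MvPolynomial.ringHom_ext (fun a => by simp) fun v => ?_
  simpa [twistHom] using congrFun (congrFun h v.1) v.2

variable [DecidableEq n]

theorem twistHom_id : twistHom (RingHom.id K) (1 : Matrix n n K) = RingHom.id _ :=
  MvPolynomial.ringHom_ext (fun a => by simp) fun v => by
    simp [twistHom, Matrix.map_one _ (map_zero C) (map_one C)]

noncomputable def twistEquiv (e : K ≃+* K) (M : Matrix n n K) (hM : IsUnit M) :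
    MvPolynomial (n × n) K ≃+* MvPolynomial (n × n) K :=
  have hdet := (Matrix.isUnit_iff_isUnit_det M).mp hM
  have hinv : (M⁻¹.map (e.symm : K →+* K)).map (e : K →+* K) = M⁻¹ := by ext; simp
  have hinv' : M.map (e.symm : K →+* K) * M⁻¹.map (e.symm : K →+* K) = 1 := by
    rw [← Matrix.map_mul, M.mul_nonsing_inv hdet, Matrix.map_one _ (map_zero _) (map_one _)]
  RingEquiv.ofRingHom (twistHom e M) (twistHom (e.symm : K →+* K) (M⁻¹.map (e.symm : K →+* K)))
    (by
      rw [twistHom_comp, hinv, M.nonsing_inv_mul hdet, ← twistHom_id]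
      congr 1; ext; simp)
    (by
      rw [twistHom_comp, hinv', ← twistHom_id]
      congr 1; ext; simp)

variable {F : Type*} [CommRing F] [Algebra K F] [Algebra (MvPolynomial (n × n) K) F]
  [IsScalarTower K (MvPolynomial (n × n) K) F] [IsFractionRing (MvPolynomial (n × n) K) F]

variable (F) in
noncomputable def twistFracEquiv (e : K ≃+* K) (M : Matrix n n K) (hM : IsUnit M) : F ≃+* F :=
  IsFractionRing.ringEquivOfRingEquiv (twistEquiv e M hM)

variable (e : K ≃+* K) (M : Matrix n n K) (hM : IsUnit M)

@[simp]
theorem twistFracEquiv_algebraMap (a : K) :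
    twistFracEquiv F e M hM (algebraMap K F a) = algebraMap K F (e a) := by
  simp [IsScalarTower.algebraMap_apply K (MvPolynomial (n × n) K) F, twistFracEquiv, twistEquiv]

@[simp]
theorem map_algebraMap_map_twistFracEquiv (N : Matrix n n K) :
    (N.map (algebraMap K F)).map (twistFracEquiv F e M hM) = (N.map e).map (algebraMap K F) := by
  ext; simp

theorem map_genericMatrix_twistFracEquiv :
    (genericMatrix K n F).map (twistFracEquiv F e M hM) =
      M.map (algebraMap K F) * genericMatrix K n F := by
  ext i j
  simp [genericMatrix, twistFracEquiv, twistEquiv, twistHom, Matrix.mul_apply,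
    IsScalarTower.algebraMap_apply K (MvPolynomial (n × n) K) F]

theorem map_genericMatrix_twistFracEquiv_comp (e' : K ≃+* K) (M' : Matrix n n K)
    (hM' : IsUnit M') :
    (genericMatrix K n F).map (twistFracEquiv F e M hM ∘ twistFracEquiv F e' M' hM') =
      (M'.map e * M).map (algebraMap K F) * genericMatrix K n F := by
  rw [← Matrix.map_map, map_genericMatrix_twistFracEquiv, Matrix.map_mul,
    map_genericMatrix_twistFracEquiv, map_algebraMap_map_twistFracEquiv, ← mul_assoc,
    Matrix.map_mul (f := algebraMap K F)]

theorem twistFracEquiv_comm {e₁ e₂ : K ≃+* K} {M₁ M₂ : Matrix n n K} (h₁ : IsUnit M₁)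
    (h₂ : IsUnit M₂) (he : ∀ a, e₁ (e₂ a) = e₂ (e₁ a))
    (hM : M₂.map e₁ * M₁ = M₁.map e₂ * M₂) (x : F) :
    twistFracEquiv F e₁ M₁ h₁ (twistFracEquiv F e₂ M₂ h₂ x) =
      twistFracEquiv F e₂ M₂ h₂ (twistFracEquiv F e₁ M₁ h₁ x) := by
  have h := genericMatrix_ringHom_ext (K := K) (n := n)
    (f := (twistFracEquiv F e₁ M₁ h₁).toRingHom.comp (twistFracEquiv F e₂ M₂ h₂).toRingHom)
    (g := (twistFracEquiv F e₂ M₂ h₂).toRingHom.comp (twistFracEquiv F e₁ M₁ h₁).toRingHom)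
    (fun a => by simp [he]) (by
      simp only [RingHom.coe_comp, RingEquiv.toRingHom_eq_coe, RingEquiv.coe_toRingHom,
        map_genericMatrix_twistFracEquiv_comp, hM])
  exact RingHom.congr_fun h x

theorem twistFracEquiv_extendDerivation_comm {d : Derivation ℤ K K} {B : Matrix n n K}
    (hed : ∀ a, e (d a) = d (e a)) (hB : B.map e * M = M.map d + M * B) (x : F) :
    twistFracEquiv F e M hM (extendDerivation F d B x) =
      extendDerivation F d B (twistFracEquiv F e M hM x) := by
  set Φ := twistFracEquiv F e M hM
  set D := extendDerivation F d B
  have hΦD : (genericMatrix K n F).map (Φ ∘ D) =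
      (B.map e * M).map (algebraMap K F) * genericMatrix K n F := by
    rw [← Matrix.map_map, map_genericMatrix_extendDerivation, Matrix.map_mul,
      map_genericMatrix_twistFracEquiv, map_algebraMap_map_twistFracEquiv, ← mul_assoc,
      Matrix.map_mul (f := algebraMap K F)]
  have hDΦ : (genericMatrix K n F).map (D ∘ Φ) =
      (M.map d + M * B).map (algebraMap K F) * genericMatrix K n F := by
    rw [← Matrix.map_map, map_genericMatrix_twistFracEquiv, Derivation.map_matrix_mul,
      map_algebraMap_map_extendDerivation, map_genericMatrix_extendDerivation,
      Matrix.map_add _ (map_add _), Matrix.map_mul, add_mul, mul_assoc]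
  have h := genericMatrix_leibniz_ext (K := K) (n := n) Φ.toRingHom
    (d₁ := AddMonoidHom.mk' (Φ ∘ D) (by simp)) (d₂ := AddMonoidHom.mk' (D ∘ Φ) (by simp))
    (fun x y => by simp [Derivation.leibniz]) (fun x y => by simp [Derivation.leibniz])
    (fun a => by simp [Φ, D, hed]) (by simp only [AddMonoidHom.mk'_apply, hΦD, hDΦ, hB])
  exact DFunLike.congr_fun h x

end Twist

namespace PhiSigmaDeltaField

variable {q r m : ℕ} {L : Type*} [Field L]

def derivation (FL : PhiSigmaDeltaField q r m L) (i : Fin m) : Derivation ℤ L L :=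
  Derivation.mk' (AddMonoidHom.mk' (FL.der i) (FL.der_add i)).toIntLinearMap fun x y => by
    simp [FL.der_mul]; ring

end PhiSigmaDeltaField

theorem statement6_general {n q r m : ℕ} (K : Type) [Field K] [CharZero K]
    (FK : PhiSigmaDeltaField q r m K)
    (A : Fin q → Matrix (Fin n) (Fin n) K) (hA : ∀ j, IsUnit (A j))
    (B : Fin m → Matrix (Fin n) (Fin n) K)
    (C : Fin r → Matrix (Fin n) (Fin n) K) (hC : ∀ i, IsUnit (C i))
    (int1 : ∀ i j, (A i).map ⇑(FK.φ j) * A j = (A j).map ⇑(FK.φ i) * A i)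
    (int2 : ∀ (i : Fin m) (j : Fin q),
      (B i).map ⇑(FK.φ j) * A j = (A j).map (FK.der i) + A j * B i)
    (int3 : ∀ i j : Fin m,
      (B i).map (FK.der j) - (B j).map (FK.der i) = B j * B i - B i * B j)
    (int4 : ∀ (i : Fin r) (j : Fin q),
      (C i).map ⇑(FK.φ j) * A j = (A j).map ⇑(FK.σ i) * C i)
    (int5 : ∀ (i : Fin m) (j : Fin r),
      (B i).map ⇑(FK.σ j) * C j = (C j).map (FK.der i) + C j * B i)
    (int6 : ∀ i j : Fin r,
      (C i).map ⇑(FK.σ j) * C j = (C j).map ⇑(FK.σ i) * C i) :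
    ∃ (L : Type) (_ : Field L) (_ : CharZero L) (_ : Algebra K L)
      (FL : PhiSigmaDeltaField q r m L),
      (∀ (j : Fin q) (x : K), FL.φ j (algebraMap K L x) = algebraMap K L (FK.φ j x)) ∧
      (∀ (i : Fin r) (x : K), FL.σ i (algebraMap K L x) = algebraMap K L (FK.σ i x)) ∧
      (∀ (i : Fin m) (x : K), FL.der i (algebraMap K L x) = algebraMap K L (FK.der i x)) ∧
      ∃ Z : Matrix (Fin n) (Fin n) L, IsUnit Z ∧
        (∀ j : Fin q, Z.map ⇑(FL.φ j) = (A j).map (algebraMap K L) * Z) ∧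
        (∀ i : Fin m, Z.map (FL.der i) = (B i).map (algebraMap K L) * Z) ∧
        (∀ k : Fin r, Z.map ⇑(FL.σ k) = (C k).map (algebraMap K L) * Z) := by
  let F := FractionRing (MvPolynomial (Fin n × Fin n) K)
  refine ⟨F, inferInstance, inferInstance, inferInstance,
    { φ := fun j => twistFracEquiv F (FK.φ j) (A j) (hA j)
      σ := fun i => twistFracEquiv F (FK.σ i) (C i) (hC i)
      der := fun i => extendDerivation F (FK.derivation i) (B i)
      der_add := fun i => map_add _
      der_mul := fun i x y => by simp [Derivation.leibniz]; ring
      comm_φφ := fun i j => twistFracEquiv_comm _ _ (FK.comm_φφ i j) (int1 i j).symm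
      comm_φσ := fun i j => twistFracEquiv_comm _ _ (FK.comm_φσ i j) (int4 j i)
      comm_σσ := fun i j => twistFracEquiv_comm _ _ (FK.comm_σσ i j) (int6 i j).symm
      comm_φder := fun i j =>
        twistFracEquiv_extendDerivation_comm _ _ _ (FK.comm_φder i j) (int2 j i)
      comm_σder := fun i j =>
        twistFracEquiv_extendDerivation_comm _ _ _ (FK.comm_σder i j) (int5 j i)
      comm_derder := fun i j => extendDerivation_comm (FK.comm_derder i j) (int3 i j) },
    fun j => twistFracEquiv_algebraMap _ _ _, fun i => twistFracEquiv_algebraMap _ _ _,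
    fun i => extendDerivation_algebraMap _ _, genericMatrix K (Fin n) F, isUnit_genericMatrix,
    fun j => map_genericMatrix_twistFracEquiv _ _ _,
    fun i => map_genericMatrix_extendDerivation _ _,
    fun k => map_genericMatrix_twistFracEquiv _ _ _⟩

theorem statement6 {n q r m : ℕ} (hn : 1 ≤ n) (K : Type) [Field K] [CharZero K]
    (FK : PhiSigmaDeltaField q r m K)
    (A : Fin q → Matrix (Fin n) (Fin n) K) (hA : ∀ j, IsUnit (A j))
    (B : Fin m → Matrix (Fin n) (Fin n) K)
    (C : Fin r → Matrix (Fin n) (Fin n) K) (hC : ∀ i, IsUnit (C i))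
    (int1 : ∀ i j, (A i).map ⇑(FK.φ j) * A j = (A j).map ⇑(FK.φ i) * A i)
    (int2 : ∀ (i : Fin m) (j : Fin q),
      (B i).map ⇑(FK.φ j) * A j = (A j).map (FK.der i) + A j * B i)
    (int3 : ∀ i j : Fin m,
      (B i).map (FK.der j) - (B j).map (FK.der i) = B j * B i - B i * B j)
    (int4 : ∀ (i : Fin r) (j : Fin q),
      (C i).map ⇑(FK.φ j) * A j = (A j).map ⇑(FK.σ i) * C i)
    (int5 : ∀ (i : Fin m) (j : Fin r),
      (B i).map ⇑(FK.σ j) * C j = (C j).map (FK.der i) + C j * B i)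
    (int6 : ∀ i j : Fin r,
      (C i).map ⇑(FK.σ j) * C j = (C j).map ⇑(FK.σ i) * C i) :
    ∃ (L : Type) (_ : Field L) (_ : CharZero L) (_ : Algebra K L)
      (FL : PhiSigmaDeltaField q r m L),
      (∀ (j : Fin q) (x : K), FL.φ j (algebraMap K L x) = algebraMap K L (FK.φ j x)) ∧
      (∀ (i : Fin r) (x : K), FL.σ i (algebraMap K L x) = algebraMap K L (FK.σ i x)) ∧
      (∀ (i : Fin m) (x : K), FL.der i (algebraMap K L x) = algebraMap K L (FK.der i x)) ∧
      ∃ Z : Matrix (Fin n) (Fin n) L, IsUnit Z ∧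
        (∀ j : Fin q, Z.map ⇑(FL.φ j) = (A j).map (algebraMap K L) * Z) ∧
        (∀ i : Fin m, Z.map (FL.der i) = (B i).map (algebraMap K L) * Z) ∧
        (∀ k : Fin r, Z.map ⇑(FL.σ k) = (C k).map (algebraMap K L) * Z) :=
  statement6_general K FK A hA B C hC int1 int2 int3 int4 int5 int6
end

section
/- Let L be a {Φ∪Σ,Δ}-field, fix φ = φ_j ∈ Φ and σ_i, σ_k ∈ Σ, and let A ∈ GL_n(L), C ∈ GL_n(L), D ∈ GL_n(L) satisfy φ(C)·A = σ_k(A)·C and φ(D)·A = σ_i(A)·D. Then the matrix M := σ_k(D)·C·D^{-1}·σ_i(C)^{-1} satisfies φ(M) = σ_i(σ_k(A))·M·σ_i(σ_k(A))^{-1}. -/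
/-! The hypotheses say that `C` and `D` are gauge transformations carrying `A` to `σ_k(A)` and
`σ_i(A)` for the gauge action `g • A = φ(g) A g⁻¹` of `GL_n` on itself. This is an action, and
the automorphisms commuting with `φ` are equivariant for it. Hence applying `σ_i(C)⁻¹`, `D⁻¹`,
`C` and `σ_k(D)` in turn moves `σ_iσ_k(A)` to `σ_i(A)`, `A`, `σ_k(A)` and back to
`σ_kσ_i(A) = σ_iσ_k(A)`, so `M` fixes `σ_iσ_k(A)`, which is the claim. -/

section Gauge

variable {G : Type*} [Group G] (φ : G →* G)

def gaugeTransform (g a : G) : G := φ g * a * g⁻¹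

theorem gaugeTransform_mul (g h a : G) :
    gaugeTransform φ (g * h) a = gaugeTransform φ g (gaugeTransform φ h a) := by
  simp only [gaugeTransform, map_mul, mul_inv_rev, mul_assoc]

theorem gaugeTransform_inv_eq_of_eq {g a b : G} (h : gaugeTransform φ g a = b) :
    gaugeTransform φ g⁻¹ b = a := by
  rw [← h, ← gaugeTransform_mul, inv_mul_cancel, gaugeTransform, map_one, one_mul, inv_one,
    mul_one]

theorem gaugeTransform_eq_iff_mul_eq {g a b : G} : gaugeTransform φ g a = b ↔ φ g * a = b * g :=
  mul_inv_eq_iff_eq_mul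

theorem gaugeTransform_eq_self_iff {g a : G} :
    gaugeTransform φ g a = a ↔ φ g = a * g * a⁻¹ := by
  rw [gaugeTransform_eq_iff_mul_eq, eq_mul_inv_iff_mul_eq]

theorem map_gaugeTransform {σ : G →* G} (hσ : Function.Commute σ φ) (g a : G) :
    σ (gaugeTransform φ g a) = gaugeTransform φ (σ g) (σ a) := by
  simp only [gaugeTransform, map_mul, map_inv, hσ g]

theorem gaugeTransform_eq_self_of_eq_map {σ τ : G →* G}
    (hσ : Function.Commute σ φ) (hτ : Function.Commute τ φ) (hστ : Function.Commute σ τ) {a c d : G}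
    (hc : gaugeTransform φ c a = τ a) (hd : gaugeTransform φ d a = σ a) :
    gaugeTransform φ (τ d * c * d⁻¹ * (σ c)⁻¹) (σ (τ a)) = σ (τ a) := by
  have hσc : gaugeTransform φ (σ c) (σ a) = σ (τ a) := by rw [← map_gaugeTransform φ hσ, hc]
  have hτd : gaugeTransform φ (τ d) (τ a) = σ (τ a) := by
    rw [← map_gaugeTransform φ hτ, hd, hστ]
  rw [gaugeTransform_mul, gaugeTransform_mul, gaugeTransform_mul,
    gaugeTransform_inv_eq_of_eq φ hσc, gaugeTransform_inv_eq_of_eq φ hd, hc, hτd]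

end Gauge

section UnitsMap

variable {ι R : Type*} [Fintype ι] [DecidableEq ι] [Semiring R]

def unitsMapMatrix (e : R ≃+* R) : (Matrix ι ι R)ˣ →* (Matrix ι ι R)ˣ :=
  Units.map (RingHom.mapMatrix (m := ι) (e : R →+* R)).toMonoidHom

@[simp]
theorem val_unitsMapMatrix (e : R ≃+* R) (u : (Matrix ι ι R)ˣ) :
    (unitsMapMatrix e u : Matrix ι ι R) = (u : Matrix ι ι R).map e :=
  rfl

theorem unitsMapMatrix_commute {e f : R ≃+* R} (h : Function.Commute e f) :
    Function.Commute (unitsMapMatrix (ι := ι) e) (unitsMapMatrix f) := fun u => by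
  ext a b
  simp only [val_unitsMapMatrix, Matrix.map_map, Function.comp_def, h _]

end UnitsMap

theorem statement8_general {n q r m : ℕ} {L : Type*} [Field L]
    (F : PhiSigmaDeltaField q r m L) (j : Fin q) (i k : Fin r)
    (A C D : Matrix (Fin n) (Fin n) L)
    (hA : IsUnit A) (hC : IsUnit C) (hD : IsUnit D)
    (hCeq : C.map ⇑(F.φ j) * A = A.map ⇑(F.σ k) * C)
    (hDeq : D.map ⇑(F.φ j) * A = A.map ⇑(F.σ i) * D) :
    (D.map ⇑(F.σ k) * C * D⁻¹ * (C.map ⇑(F.σ i))⁻¹).map ⇑(F.φ j) =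
      (A.map ⇑(F.σ k)).map ⇑(F.σ i) *
        (D.map ⇑(F.σ k) * C * D⁻¹ * (C.map ⇑(F.σ i))⁻¹) *
        ((A.map ⇑(F.σ k)).map ⇑(F.σ i))⁻¹ := by
  obtain ⟨a, rfl⟩ := hA
  obtain ⟨c, rfl⟩ := hC
  obtain ⟨d, rfl⟩ := hD
  simp only [← val_unitsMapMatrix, ← Matrix.coe_units_inv, ← Units.val_mul, Units.val_inj]
    at hCeq hDeq ⊢
  have key := gaugeTransform_eq_self_of_eq_map (unitsMapMatrix (F.φ j))
    (unitsMapMatrix_commute (Function.Commute.symm (F.comm_φσ j i)))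
    (unitsMapMatrix_commute (Function.Commute.symm (F.comm_φσ j k)))
    (unitsMapMatrix_commute (F.comm_σσ i k))
    ((gaugeTransform_eq_iff_mul_eq _).mpr hCeq) ((gaugeTransform_eq_iff_mul_eq _).mpr hDeq)
  exact (gaugeTransform_eq_self_iff _).mp key

theorem statement8 {n q r m : ℕ} (hn : 1 ≤ n) {L : Type*} [Field L] [CharZero L]
    (F : PhiSigmaDeltaField q r m L) (j : Fin q) (i k : Fin r)
    (A C D : Matrix (Fin n) (Fin n) L)
    (hA : IsUnit A) (hC : IsUnit C) (hD : IsUnit D)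
    (hCeq : C.map ⇑(F.φ j) * A = A.map ⇑(F.σ k) * C)
    (hDeq : D.map ⇑(F.φ j) * A = A.map ⇑(F.σ i) * D) :
    (D.map ⇑(F.σ k) * C * D⁻¹ * (C.map ⇑(F.σ i))⁻¹).map ⇑(F.φ j) =
      (A.map ⇑(F.σ k)).map ⇑(F.σ i) *
        (D.map ⇑(F.σ k) * C * D⁻¹ * (C.map ⇑(F.σ i))⁻¹) *
        ((A.map ⇑(F.σ k)).map ⇑(F.σ i))⁻¹ :=
  statement8_general F j i k A C D hA hC hD hCeq hDeq
end

section
/- Let L be a {Φ∪Σ,Δ}-field, fix φ = φ_j ∈ Φ and σ_i, σ_k ∈ Σ, and let A ∈ GL_n(L), D ∈ GL_n(L) satisfy φ(D)·A = σ_i(A)·D. If Z ∈ M_n(L) satisfies φ(Z) = σ_k(A)·Z·σ_k(A)^{-1}, then the matrix W := σ_k(D)·Z·σ_k(D)^{-1} satisfies φ(W) = σ_i(σ_k(A))·W·σ_i(σ_k(A))^{-1}; equivalently, the matrix σ_i^{-1}(W) again satisfies φ(σ_i^{-1}(W)) = σ_k(A)·σ_i^{-1}(W)·σ_k(A)^{-1}.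 -/
section Conjugation

variable {M F : Type*} [Monoid M] [FunLike F M M] [MonoidHomClass F M M]

theorem map_conj_eq_conj_of_map_mul_eq (f : F) {a b d : Mˣ} (hd : f d * a = b * d) {z : M}
    (hz : f z = a * z * ↑a⁻¹) : f (d * z * ↑d⁻¹) = b * (d * z * ↑d⁻¹) * ↑b⁻¹ := by
  have hfd : f d = b * d * ↑a⁻¹ := by rw [← hd, Units.mul_inv_cancel_right]
  have hfd_unit : Units.map (f : M →* M) d = b * d * a⁻¹ := Units.ext hfd
  have hfd_inv : f ↑d⁻¹ = a * ↑d⁻¹ * ↑b⁻¹ := by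
    have := Units.coe_map_inv (f : M →* M) d
    rw [MonoidHom.coe_coe] at this
    rw [← this, hfd_unit]
    simp only [mul_inv_rev, inv_inv, mul_assoc, Units.val_mul]
  rw [map_mul, map_mul, hz, hfd_inv, hfd]
  simp only [mul_assoc, Units.inv_mul_cancel_left]

theorem map_eq_conj_of_map_comp_eq_conj {f g : F} (hg : Function.Injective g)
    (hcomm : ∀ x, f (g x) = g (f x)) {a : Mˣ} {v : M} (h : f (g v) = g a * g v * g ↑a⁻¹) :
    f v = a * v * ↑a⁻¹ :=
  hg (by rw [← hcomm, h, map_mul, map_mul])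

end Conjugation

theorem RingEquiv.mapMatrix_comm {m α : Type*} [Fintype m] [DecidableEq m] [NonAssocSemiring α]
    {e e' : α ≃+* α} (h : ∀ x, e (e' x) = e' (e x)) (X : Matrix m m α) :
    e.mapMatrix (e'.mapMatrix X) = e'.mapMatrix (e.mapMatrix X) := by
  ext
  simp [h]

theorem statement10_general {n q r m : ℕ} {L : Type*} [Field L]
    (F : PhiSigmaDeltaField q r m L) (j : Fin q) (i k : Fin r)
    (A D : Matrix (Fin n) (Fin n) L) (hA : IsUnit A) (hD : IsUnit D)
    (hDeq : D.map ⇑(F.φ j) * A = A.map ⇑(F.σ i) * D)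
    (Z : Matrix (Fin n) (Fin n) L)
    (hZ : Z.map ⇑(F.φ j) = A.map ⇑(F.σ k) * Z * (A.map ⇑(F.σ k))⁻¹) :
    (D.map ⇑(F.σ k) * Z * (D.map ⇑(F.σ k))⁻¹).map ⇑(F.φ j) =
        (A.map ⇑(F.σ k)).map ⇑(F.σ i) *
          (D.map ⇑(F.σ k) * Z * (D.map ⇑(F.σ k))⁻¹) *
          ((A.map ⇑(F.σ k)).map ⇑(F.σ i))⁻¹ ∧
      ((D.map ⇑(F.σ k) * Z * (D.map ⇑(F.σ k))⁻¹).map ⇑(F.σ i).symm).map ⇑(F.φ j) =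
        A.map ⇑(F.σ k) *
          ((D.map ⇑(F.σ k) * Z * (D.map ⇑(F.σ k))⁻¹).map ⇑(F.σ i).symm) *
          (A.map ⇑(F.σ k))⁻¹ := by
  obtain ⟨a, ha⟩ := hA.map (F.σ k).mapMatrix
  obtain ⟨d, hd⟩ := hD.map (F.σ k).mapMatrix
  set b := Units.map (MonoidHomClass.toMonoidHom ((F.σ i).mapMatrix (m := Fin n))) a
  have hDeq' : (F.φ j).mapMatrix (d : Matrix (Fin n) (Fin n) L) * a = b * d := by
    have := congrArg (F.σ k).mapMatrix hDeq
    simp only [map_mul, ← RingEquiv.mapMatrix_apply] at this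
    rw [← RingEquiv.mapMatrix_comm (F.comm_φσ j k), ← RingEquiv.mapMatrix_comm (F.comm_σσ i k),
      ← ha, ← hd] at this
    simpa only [b, Units.coe_map, MonoidHom.coe_coe] using this
  have hZ' : (F.φ j).mapMatrix Z = a * Z * (↑a⁻¹ : Matrix (Fin n) (Fin n) L) := by
    simpa only [Matrix.coe_units_inv, ← RingEquiv.mapMatrix_apply, ← ha] using hZ
  have hW := map_conj_eq_conj_of_map_mul_eq (F.φ j).mapMatrix hDeq' hZ'
  have hb : (F.σ i).mapMatrix (a : Matrix (Fin n) (Fin n) L) = b := rfl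
  simp only [← RingEquiv.mapMatrix_apply, ← ha, ← hd, hb, ← Matrix.coe_units_inv]
  refine ⟨hW, map_eq_conj_of_map_comp_eq_conj (F.σ i).mapMatrix.injective
    (RingEquiv.mapMatrix_comm (F.comm_φσ j i)) ?_⟩
  rw [← RingEquiv.mapMatrix_symm, RingEquiv.apply_symm_apply]
  simpa only [b, Units.coe_map, Units.coe_map_inv, MonoidHom.coe_coe] using hW

theorem statement10 {n q r m : ℕ} (hn : 1 ≤ n) {L : Type*} [Field L] [CharZero L]
    (F : PhiSigmaDeltaField q r m L) (j : Fin q) (i k : Fin r)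
    (A D : Matrix (Fin n) (Fin n) L) (hA : IsUnit A) (hD : IsUnit D)
    (hDeq : D.map ⇑(F.φ j) * A = A.map ⇑(F.σ i) * D)
    (Z : Matrix (Fin n) (Fin n) L)
    (hZ : Z.map ⇑(F.φ j) = A.map ⇑(F.σ k) * Z * (A.map ⇑(F.σ k))⁻¹) :
    (D.map ⇑(F.σ k) * Z * (D.map ⇑(F.σ k))⁻¹).map ⇑(F.φ j) =
        (A.map ⇑(F.σ k)).map ⇑(F.σ i) *
          (D.map ⇑(F.σ k) * Z * (D.map ⇑(F.σ k))⁻¹) *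
          ((A.map ⇑(F.σ k)).map ⇑(F.σ i))⁻¹ ∧
      ((D.map ⇑(F.σ k) * Z * (D.map ⇑(F.σ k))⁻¹).map ⇑(F.σ i).symm).map ⇑(F.φ j) =
        A.map ⇑(F.σ k) *
          ((D.map ⇑(F.σ k) * Z * (D.map ⇑(F.σ k))⁻¹).map ⇑(F.σ i).symm) *
          (A.map ⇑(F.σ k))⁻¹ :=
  statement10_general F j i k A D hA hD hDeq Z hZ
end

section
/- Let L be a {Φ∪Σ,Δ}-field, fix ∂ = ∂_j ∈ Δ and σ_i, σ_k ∈ Σ, and let B ∈ M_n(L), D ∈ GL_n(L) satisfy σ_i(B)·D = ∂(D) + D·B. If Z ∈ M_n(L) satisfies ∂(Z) = [σ_k(B), Z], then the matrix W := σ_k(D)·Z·σ_k(D)^{-1} satisfies ∂(W) = [σ_i(σ_k(B)), W]; equivalently, the matrix σ_i^{-1}(W) again satisfies ∂(σ_i^{-1}(W)) = [σ_k(B), σ_i^{-1}(W)]. -/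
def IsLeibniz {R : Type*} [Ring R] (δ : R → R) : Prop :=
  ∀ x y, δ (x * y) = δ x * y + x * δ y

namespace IsLeibniz

variable {R : Type*} [Ring R] {δ : R →+ R}

theorem map_one (hδ : IsLeibniz δ) : δ 1 = 0 := by
  simpa using hδ 1 1

theorem map_inverse (hδ : IsLeibniz δ) {u v : R} (huv : u * v = 1) (hvu : v * u = 1) :
    δ v = -(v * δ u * v) := by
  have h : δ u * v + u * δ v = 0 := by rw [← hδ, huv, hδ.map_one]
  calc δ v = v * (u * δ v) := by rw [← mul_assoc, hvu, one_mul]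
    _ = -(v * δ u * v) := by rw [eq_neg_of_add_eq_zero_right h]; noncomm_ring

theorem map_conj_of_gauge (hδ : IsLeibniz δ) {u v b₀ b₁ z : R} (huv : u * v = 1)
    (hvu : v * u = 1) (hu : δ u = b₁ * u - u * b₀) (hz : δ z = b₀ * z - z * b₀) :
    δ (u * z * v) = b₁ * (u * z * v) - u * z * v * b₁ := by
  have hv : δ v = (v * u) * b₀ * v - v * b₁ * (u * v) := by
    rw [hδ.map_inverse huv hvu, hu]; noncomm_ring
  rw [huv, hvu] at hv
  rw [hδ, hδ, hu, hz, hv]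
  noncomm_ring

end IsLeibniz

section MatrixMap

variable {ι L : Type*} [Fintype ι] [DecidableEq ι] [CommRing L]

theorem IsLeibniz.mapMatrix {d : L →+ L} (hd : IsLeibniz d) :
    IsLeibniz (d.mapMatrix : Matrix ι ι L →+ Matrix ι ι L) := by
  intro A B
  ext a b
  simp [Matrix.mul_apply, hd _ _, Finset.sum_add_distrib]

theorem Matrix.map_gauge_of_comm (f : L ≃+* L) {d : L → L} (hfd : ∀ x, f (d x) = d (f x))
    {X C₀ C₁ : Matrix ι ι L} (hX : X.map d = C₁ * X - X * C₀) :
    (X.map f).map d = C₁.map f * X.map f - X.map f * C₀.map f := by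
  calc (X.map f).map d = f.mapMatrix (X.map d) := by ext; simp [hfd]
    _ = C₁.map f * X.map f - X.map f * C₀.map f := by rw [hX, map_sub, map_mul, map_mul]; rfl

end MatrixMap

theorem RingEquiv.symm_comm_of_comm {L : Type*} [Semiring L] (f : L ≃+* L) {d : L → L}
    (hfd : ∀ x, f (d x) = d (f x)) (x : L) : f.symm (d x) = d (f.symm x) :=
  f.injective (by rw [hfd, f.apply_symm_apply, f.apply_symm_apply])

theorem statement11_general {n q r m : ℕ} {L : Type*} [Field L]
    (F : PhiSigmaDeltaField q r m L) (j : Fin m) (i k : Fin r)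
    (B D : Matrix (Fin n) (Fin n) L) (hD : IsUnit D)
    (hDeq : B.map ⇑(F.σ i) * D = D.map (F.der j) + D * B)
    (Z : Matrix (Fin n) (Fin n) L)
    (hZ : Z.map (F.der j) = B.map ⇑(F.σ k) * Z - Z * B.map ⇑(F.σ k)) :
    (D.map ⇑(F.σ k) * Z * (D.map ⇑(F.σ k))⁻¹).map (F.der j) =
        (B.map ⇑(F.σ k)).map ⇑(F.σ i) *
            (D.map ⇑(F.σ k) * Z * (D.map ⇑(F.σ k))⁻¹) -
          (D.map ⇑(F.σ k) * Z * (D.map ⇑(F.σ k))⁻¹) *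
            (B.map ⇑(F.σ k)).map ⇑(F.σ i) ∧
      ((D.map ⇑(F.σ k) * Z * (D.map ⇑(F.σ k))⁻¹).map ⇑(F.σ i).symm).map (F.der j) =
        B.map ⇑(F.σ k) *
            ((D.map ⇑(F.σ k) * Z * (D.map ⇑(F.σ k))⁻¹).map ⇑(F.σ i).symm) -
          ((D.map ⇑(F.σ k) * Z * (D.map ⇑(F.σ k))⁻¹).map ⇑(F.σ i).symm) *
            B.map ⇑(F.σ k) := by
  set d : L →+ L := AddMonoidHom.mk' (F.der j) (F.der_add j)
  have hδ : IsLeibniz (d.mapMatrix : Matrix (Fin n) (Fin n) L →+ _) :=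
    IsLeibniz.mapMatrix (F.der_mul j)
  set E := D.map ⇑(F.σ k)
  have hE : IsUnit E.det := (Matrix.isUnit_iff_isUnit_det E).mp (hD.map (F.σ k).mapMatrix)
  have hσσ : (B.map ⇑(F.σ i)).map ⇑(F.σ k) = (B.map ⇑(F.σ k)).map ⇑(F.σ i) := by
    ext a b
    exact F.comm_σσ k i (B a b)
  have hEeq : E.map d = (B.map ⇑(F.σ k)).map ⇑(F.σ i) * E - E * B.map ⇑(F.σ k) := by
    rw [← hσσ]
    exact Matrix.map_gauge_of_comm _ (F.comm_σder k j) (eq_sub_of_add_eq hDeq.symm)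
  have hW := hδ.map_conj_of_gauge (E.mul_nonsing_inv hE) (E.nonsing_inv_mul hE) hEeq hZ
  refine ⟨hW, ?_⟩
  have hBk : ((B.map ⇑(F.σ k)).map ⇑(F.σ i)).map ⇑(F.σ i).symm = B.map ⇑(F.σ k) := by
    ext; simp
  rw [← hBk]
  exact Matrix.map_gauge_of_comm _ ((F.σ i).symm_comm_of_comm (F.comm_σder i j)) hW

theorem statement11 {n q r m : ℕ} (hn : 1 ≤ n) {L : Type*} [Field L] [CharZero L]
    (F : PhiSigmaDeltaField q r m L) (j : Fin m) (i k : Fin r)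
    (B D : Matrix (Fin n) (Fin n) L) (hD : IsUnit D)
    (hDeq : B.map ⇑(F.σ i) * D = D.map (F.der j) + D * B)
    (Z : Matrix (Fin n) (Fin n) L)
    (hZ : Z.map (F.der j) = B.map ⇑(F.σ k) * Z - Z * B.map ⇑(F.σ k)) :
    (D.map ⇑(F.σ k) * Z * (D.map ⇑(F.σ k))⁻¹).map (F.der j) =
        (B.map ⇑(F.σ k)).map ⇑(F.σ i) *
            (D.map ⇑(F.σ k) * Z * (D.map ⇑(F.σ k))⁻¹) -
          (D.map ⇑(F.σ k) * Z * (D.map ⇑(F.σ k))⁻¹) *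
            (B.map ⇑(F.σ k)).map ⇑(F.σ i) ∧
      ((D.map ⇑(F.σ k) * Z * (D.map ⇑(F.σ k))⁻¹).map ⇑(F.σ i).symm).map (F.der j) =
        B.map ⇑(F.σ k) *
            ((D.map ⇑(F.σ k) * Z * (D.map ⇑(F.σ k))⁻¹).map ⇑(F.σ i).symm) -
          ((D.map ⇑(F.σ k) * Z * (D.map ⇑(F.σ k))⁻¹).map ⇑(F.σ i).symm) *
            B.map ⇑(F.σ k) :=
  statement11_general F j i k B D hD hDeq Z hZ
end

section
/- Let L be a {Φ∪Σ,Δ}-field, fix φ = φ_j ∈ Φ and σ_i, σ_k ∈ Σ, and let A ∈ GL_n(L), C ∈ GL_n(L), D ∈ GL_n(L) satisfy φ(C)·A = σ_k(A)·C and φ(D)·A = σ_i(A)·D. If Z ∈ M_n(L) satisfies φ(Z) = σ_k(A)·Z·σ_k(A)^{-1}, then the matrix N := σ_k(D)·Z·C·D^{-1}·σ_i(C)^{-1} satisfies φ(N) = σ_i(σ_k(A))·N·σ_i(σ_k(A))^{-1}; equivalently, σ_i^{-1}(N) again satisfies φ(σ_i^{-1}(N)) = σ_k(A)·σ_i^{-1}(N)·σ_k(A)^{-1}.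 -/
namespace Matrix

variable {ι R : Type*} [Fintype ι] [CommRing R]

def IsDifferenceHom (φ : R ≃+* R) (V U M : Matrix ι ι R) : Prop :=
  M.map φ * V = U * M

namespace IsDifferenceHom

variable {φ : R ≃+* R} {U V W M N : Matrix ι ι R}

theorem mul (hM : IsDifferenceHom φ V U M) (hN : IsDifferenceHom φ W V N) :
    IsDifferenceHom φ W U (M * N) := by
  unfold IsDifferenceHom at *
  simp only [Matrix.map_mul]
  rw [Matrix.mul_assoc, hN, ← Matrix.mul_assoc, hM, Matrix.mul_assoc]

theorem map {G : Type*} [FunLike G R R] [RingHomClass G R R] {ψ : G}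
    (hψ : ∀ x, φ (ψ x) = ψ (φ x)) (hM : IsDifferenceHom φ V U M) :
    IsDifferenceHom φ (V.map ψ) (U.map ψ) (M.map ψ) := by
  have hcomm : (M.map ψ).map φ = (M.map φ).map ψ := by
    simp only [Matrix.map_map, Function.comp_def, hψ]
  unfold IsDifferenceHom at *
  simp only [hcomm, ← Matrix.map_mul, hM]

end IsDifferenceHom

variable [DecidableEq ι]

theorem isUnit_det_map_iff {S : Type*} [CommRing S] (e : R ≃+* S) (M : Matrix ι ι R) :
    IsUnit (M.map e).det ↔ IsUnit M.det := by
  rw [← e.mapMatrix_apply, ← RingEquiv.map_det, isUnit_map_iff]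

theorem map_nonsing_inv {S : Type*} [CommRing S] (e : R ≃+* S) (M : Matrix ι ι R) :
    M⁻¹.map e = (M.map e)⁻¹ := by
  by_cases hM : IsUnit M.det
  · refine (inv_eq_left_inv ?_).symm
    simp [← Matrix.map_mul, nonsing_inv_mul _ hM]
  · have hMe : ¬IsUnit (M.map e).det := by rwa [isUnit_det_map_iff]
    simp [nonsing_inv_apply_not_isUnit _ hM, nonsing_inv_apply_not_isUnit _ hMe]

theorem isDifferenceHom_iff_map_eq {φ : R ≃+* R} {V U M : Matrix ι ι R} (hV : IsUnit V) :
    IsDifferenceHom φ V U M ↔ M.map φ = U * M * V⁻¹ := by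
  have hV : IsUnit V.det := (isUnit_iff_isUnit_det V).mp hV
  constructor
  · intro h
    rw [← h, mul_nonsing_inv_cancel_right _ _ hV]
  · intro h
    rw [IsDifferenceHom, h, nonsing_inv_mul_cancel_right _ _ hV]

theorem IsDifferenceHom.inv {φ : R ≃+* R} {V U M : Matrix ι ι R}
    (hM : IsDifferenceHom φ V U M) : IsDifferenceHom φ U V M⁻¹ := by
  by_cases hdet : IsUnit M.det
  · have hφdet : IsUnit (M.map φ).det := by rwa [isUnit_det_map_iff]
    calc M⁻¹.map φ * U = (M.map φ)⁻¹ * (U * M * M⁻¹) := by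
          rw [map_nonsing_inv, mul_nonsing_inv_cancel_right _ _ hdet]
      _ = V * M⁻¹ := by
          rw [← hM, Matrix.mul_assoc, nonsing_inv_mul_cancel_left _ _ hφdet]
  · simp [IsDifferenceHom, nonsing_inv_apply_not_isUnit _ hdet]

end Matrix

theorem statement12_general {n q r m : ℕ} {L : Type*} [Field L]
    (F : PhiSigmaDeltaField q r m L) (j : Fin q) (i k : Fin r)
    (A C D : Matrix (Fin n) (Fin n) L)
    (hA : IsUnit A)
    (hCeq : C.map ⇑(F.φ j) * A = A.map ⇑(F.σ k) * C)
    (hDeq : D.map ⇑(F.φ j) * A = A.map ⇑(F.σ i) * D)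
    (Z : Matrix (Fin n) (Fin n) L)
    (hZ : Z.map ⇑(F.φ j) = A.map ⇑(F.σ k) * Z * (A.map ⇑(F.σ k))⁻¹) :
    (D.map ⇑(F.σ k) * Z * C * D⁻¹ * (C.map ⇑(F.σ i))⁻¹).map ⇑(F.φ j) =
        (A.map ⇑(F.σ k)).map ⇑(F.σ i) *
          (D.map ⇑(F.σ k) * Z * C * D⁻¹ * (C.map ⇑(F.σ i))⁻¹) *
          ((A.map ⇑(F.σ k)).map ⇑(F.σ i))⁻¹ ∧
      ((D.map ⇑(F.σ k) * Z * C * D⁻¹ * (C.map ⇑(F.σ i))⁻¹).map ⇑(F.σ i).symm).map ⇑(F.φ j) =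
        A.map ⇑(F.σ k) *
          ((D.map ⇑(F.σ k) * Z * C * D⁻¹ * (C.map ⇑(F.σ i))⁻¹).map ⇑(F.σ i).symm) *
          (A.map ⇑(F.σ k))⁻¹ := by
  set φ := F.φ j
  set σ := F.σ i
  set τ := F.σ k
  have hφσ : ∀ x, φ (σ x) = σ (φ x) := F.comm_φσ j i
  have hφσ_symm : ∀ x, φ (σ.symm x) = σ.symm (φ x) := fun x => by
    rw [σ.eq_symm_apply, ← hφσ, σ.apply_symm_apply]
  have hτσ : (A.map σ).map τ = (A.map τ).map σ := by
    ext a b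
    exact F.comm_σσ k i (A a b)
  have hσ_cancel : ((A.map τ).map σ).map σ.symm = A.map τ := by
    ext a b
    exact σ.symm_apply_apply _
  have hτA : IsUnit (A.map τ) := hA.map τ.mapMatrix
  have hστA : IsUnit ((A.map τ).map σ) := hτA.map σ.mapMatrix
  have hC : Matrix.IsDifferenceHom φ A (A.map τ) C := hCeq
  have hD : Matrix.IsDifferenceHom φ A (A.map σ) D := hDeq
  have hZ : Matrix.IsDifferenceHom φ (A.map τ) (A.map τ) Z :=
    (Matrix.isDifferenceHom_iff_map_eq hτA).2 hZ
  have hτD := hD.map (F.comm_φσ j k)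
  rw [hτσ] at hτD
  have hN := (((hτD.mul hZ).mul hC).mul hD.inv).mul (hC.map hφσ).inv
  have hN_symm := hN.map hφσ_symm
  rw [hσ_cancel] at hN_symm
  exact ⟨(Matrix.isDifferenceHom_iff_map_eq hστA).1 hN,
    (Matrix.isDifferenceHom_iff_map_eq hτA).1 hN_symm⟩

theorem statement12 {n q r m : ℕ} (hn : 1 ≤ n) {L : Type*} [Field L] [CharZero L]
    (F : PhiSigmaDeltaField q r m L) (j : Fin q) (i k : Fin r)
    (A C D : Matrix (Fin n) (Fin n) L)
    (hA : IsUnit A) (hC : IsUnit C) (hD : IsUnit D)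
    (hCeq : C.map ⇑(F.φ j) * A = A.map ⇑(F.σ k) * C)
    (hDeq : D.map ⇑(F.φ j) * A = A.map ⇑(F.σ i) * D)
    (Z : Matrix (Fin n) (Fin n) L)
    (hZ : Z.map ⇑(F.φ j) = A.map ⇑(F.σ k) * Z * (A.map ⇑(F.σ k))⁻¹) :
    (D.map ⇑(F.σ k) * Z * C * D⁻¹ * (C.map ⇑(F.σ i))⁻¹).map ⇑(F.φ j) =
        (A.map ⇑(F.σ k)).map ⇑(F.σ i) *
          (D.map ⇑(F.σ k) * Z * C * D⁻¹ * (C.map ⇑(F.σ i))⁻¹) *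
          ((A.map ⇑(F.σ k)).map ⇑(F.σ i))⁻¹ ∧
      ((D.map ⇑(F.σ k) * Z * C * D⁻¹ * (C.map ⇑(F.σ i))⁻¹).map ⇑(F.σ i).symm).map ⇑(F.φ j) =
        A.map ⇑(F.σ k) *
          ((D.map ⇑(F.σ k) * Z * C * D⁻¹ * (C.map ⇑(F.σ i))⁻¹).map ⇑(F.σ i).symm) *
          (A.map ⇑(F.σ k))⁻¹ :=
  statement12_general F j i k A C D hA hCeq hDeq Z hZ
end

section
/- Let L be a {Φ∪Σ,Δ}-field, fix σ_u, σ_v, σ_k ∈ Σ, and let C ∈ GL_n(L) and D_u, D_v ∈ GL_n(L) satisfy σ_u(D_v)·D_u = σ_v(D_u)·D_v. Then for every matrix Z ∈ M_n(L): σ_u(σ_k(D_v)) · (σ_k(D_u)·Z·C·D_u^{-1}·σ_u(C)^{-1}) · σ_u(C·D_v^{-1}·σ_v(C)^{-1}) = σ_v(σ_k(D_u)) · (σ_k(D_v)·Z·C·D_v^{-1}·σ_v(C)^{-1}) · σ_v(C·D_u^{-1}·σ_u(C)^{-1}). (This is the integrability/compatibility of the system of equations σ_i(Z) = σ_k(D_i)·Z·C·D_i^{-1}·σ_i(C)^{-1}.)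 -/
namespace Matrix

theorem map_nonsing_inv_s14 {n K K' : Type*} [Fintype n] [DecidableEq n] [Field K] [Field K']
    (f : K →+* K') (A : Matrix n n K) : A⁻¹.map f = (A.map f)⁻¹ := by
  have hdet : (A.map f).det = f A.det := (f.map_det A).symm
  have hadj : (A.map f).adjugate = A.adjugate.map f := (f.map_adjugate A).symm
  rw [inv_def, inv_def, hdet, hadj, Ring.inverse_eq_inv', Ring.inverse_eq_inv', ← map_inv₀]
  ext i j
  simp

theorem map_map_comm {m n α : Type*} {f g : α → α} (hfg : ∀ x, f (g x) = g (f x))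
    (A : Matrix m n α) : (A.map g).map f = (A.map f).map g := by
  ext i j
  exact hfg (A i j)

end Matrix

open Matrix

/-- Applying `σu` to the equation `σv Z = σk(Dv) Z C Dv⁻¹ σv(C)⁻¹` and substituting
`σu Z = σk(Du) Z C Du⁻¹ σu(C)⁻¹` yields an expression that depends on `Du`, `Dv` only
through `P = σu(Dv) Du`. -/
theorem twisted_step_comp {n L : Type*} [Fintype n] [DecidableEq n] [Field L]
    (σu σv σk : L →+* L) (hcomm : ∀ x, σu (σk x) = σk (σu x))
    {C : Matrix n n L} (hC : IsUnit C) (Du Dv Z : Matrix n n L) :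
    (Dv.map σk).map σu * (Du.map σk * Z * C * Du⁻¹ * (C.map σu)⁻¹) *
        (C * Dv⁻¹ * (C.map σv)⁻¹).map σu =
      (Dv.map σu * Du).map σk * Z * C * (Dv.map σu * Du)⁻¹ * ((C.map σv).map σu)⁻¹ := by
  have hCu : IsUnit (C.map σu).det := (isUnit_iff_isUnit_det _).mp (hC.map σu.mapMatrix)
  rw [Matrix.map_mul, Matrix.map_mul, map_nonsing_inv_s14, map_nonsing_inv_s14, Matrix.map_mul,
    map_map_comm hcomm, Matrix.mul_inv_rev]
  simp only [Matrix.mul_assoc, nonsing_inv_mul_cancel_left _ _ hCu]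

theorem statement14_general {n q r m : ℕ} {L : Type*} [Field L]
    (F : PhiSigmaDeltaField q r m L) (u v k : Fin r)
    (C Du Dv : Matrix (Fin n) (Fin n) L)
    (hC : IsUnit C)
    (hDuv : Dv.map ⇑(F.σ u) * Du = Du.map ⇑(F.σ v) * Dv) :
    ∀ Z : Matrix (Fin n) (Fin n) L,
      (Dv.map ⇑(F.σ k)).map ⇑(F.σ u) *
          (Du.map ⇑(F.σ k) * Z * C * Du⁻¹ * (C.map ⇑(F.σ u))⁻¹) *
          (C * Dv⁻¹ * (C.map ⇑(F.σ v))⁻¹).map ⇑(F.σ u) =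
        (Du.map ⇑(F.σ k)).map ⇑(F.σ v) *
          (Dv.map ⇑(F.σ k) * Z * C * Dv⁻¹ * (C.map ⇑(F.σ v))⁻¹) *
          (C * Du⁻¹ * (C.map ⇑(F.σ u))⁻¹).map ⇑(F.σ v) := by
  intro Z
  have hu := twisted_step_comp (F.σ u : L →+* L) (F.σ v) (F.σ k) (F.comm_σσ u k) hC Du Dv Z
  have hv := twisted_step_comp (F.σ v : L →+* L) (F.σ u) (F.σ k) (F.comm_σσ v k) hC Dv Du Z
  simp only [RingEquiv.coe_toRingHom] at hu hv
  rw [hu, hv, hDuv, map_map_comm (F.comm_σσ u v)]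

theorem statement14 {n q r m : ℕ} (hn : 1 ≤ n) {L : Type*} [Field L] [CharZero L]
    (F : PhiSigmaDeltaField q r m L) (u v k : Fin r)
    (C Du Dv : Matrix (Fin n) (Fin n) L)
    (hC : IsUnit C) (hDu : IsUnit Du) (hDv : IsUnit Dv)
    (hDuv : Dv.map ⇑(F.σ u) * Du = Du.map ⇑(F.σ v) * Dv) :
    ∀ Z : Matrix (Fin n) (Fin n) L,
      (Dv.map ⇑(F.σ k)).map ⇑(F.σ u) *
          (Du.map ⇑(F.σ k) * Z * C * Du⁻¹ * (C.map ⇑(F.σ u))⁻¹) *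
          (C * Dv⁻¹ * (C.map ⇑(F.σ v))⁻¹).map ⇑(F.σ u) =
        (Du.map ⇑(F.σ k)).map ⇑(F.σ v) *
          (Dv.map ⇑(F.σ k) * Z * C * Dv⁻¹ * (C.map ⇑(F.σ v))⁻¹) *
          (C * Du⁻¹ * (C.map ⇑(F.σ u))⁻¹).map ⇑(F.σ v) :=
  statement14_general F u v k C Du Dv hC hDuv
end

section
/- Let L be a {Φ∪Σ,Δ}-field, fix σ_k ∈ Σ and an index 2 ≤ k ≤ r, and let A_1,…,A_q ∈ GL_n(L), B_1,…,B_m ∈ M_n(L), C_k ∈ GL_n(L), and D_1,…,D_{k−1} ∈ GL_n(L) satisfy: φ_j(C_k)·A_j = σ_k(A_j)·C_k for all 1 ≤ j ≤ q, and σ_k(B_i)·C_k = ∂_i(C_k) + C_k·B_i for all 1 ≤ i ≤ m. Then for any Z ∈ GL_n(L), the following two conditions are equivalent: (I) σ_k(A_j)·Z·C_k = φ_j(Z·C_k)·A_j for all 1 ≤ j ≤ q, σ_k(B_i)·Z·C_k = ∂_i(Z·C_k) + Z·C_k·B_i for all 1 ≤ i ≤ m, and σ_k(D_i)·Z·C_k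 = σ_i(Z·C_k)·D_i for all 1 ≤ i ≤ k−1; (II) φ_j(Z) = σ_k(A_j)·Z·σ_k(A_j)^{-1} for all 1 ≤ j ≤ q, ∂_i(Z) = [σ_k(B_i), Z] for all 1 ≤ i ≤ m, and σ_i(Z) = σ_k(D_i)·Z·C_k·D_i^{-1}·σ_i(C_k)^{-1} for all 1 ≤ i ≤ k−1. -/
section Aux

variable {n : ℕ} {L : Type*} [Field L]

lemma aux_cancel_right {A X Y : Matrix (Fin n) (Fin n) L} (hA : IsUnit A) :
    X * A = Y * A ↔ X = Y := by
  have hd := (Matrix.isUnit_iff_isUnit_det A).mp hA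
  constructor
  · intro h
    calc X = X * A * A⁻¹ := (Matrix.mul_nonsing_inv_cancel_right A X hd).symm
    _ = Y * A * A⁻¹ := by rw [h]
    _ = Y := Matrix.mul_nonsing_inv_cancel_right A Y hd
  · intro h; rw [h]

lemma aux_map_der {d : L → L} (hadd : ∀ x y, d (x + y) = d x + d y)
    (hmul : ∀ x y, d (x * y) = d x * y + x * d y)
    (X Y : Matrix (Fin n) (Fin n) L) :
    (X * Y).map d = X.map d * Y + X * Y.map d := by
  have h0 : d 0 = 0 := by
    have := hadd 0 0; simpa using this
  let dh : L →+ L := AddMonoidHom.mk' d hadd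
  ext i j
  simp only [Matrix.map_apply, Matrix.mul_apply, Matrix.add_apply]
  rw [show d (∑ l, X i l * Y l j) = dh (∑ l, X i l * Y l j) from rfl, map_sum]
  rw [← Finset.sum_add_distrib]
  congr 1; ext l
  exact hmul _ _

end Aux

theorem statement15 {n q r m : ℕ} (hn : 1 ≤ n) {L : Type*} [Field L] [CharZero L]
    (F : PhiSigmaDeltaField q r m L) (k : Fin r) (hk : 1 ≤ (k : ℕ))
    (A : Fin q → Matrix (Fin n) (Fin n) L) (hA : ∀ j, IsUnit (A j))
    (B : Fin m → Matrix (Fin n) (Fin n) L)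
    (Ck : Matrix (Fin n) (Fin n) L) (hCk : IsUnit Ck)
    (D : Fin r → Matrix (Fin n) (Fin n) L)
    (hD : ∀ i : Fin r, (i : ℕ) < (k : ℕ) → IsUnit (D i))
    (hCkφ : ∀ j, Ck.map ⇑(F.φ j) * A j = (A j).map ⇑(F.σ k) * Ck)
    (hCkder : ∀ i, (B i).map ⇑(F.σ k) * Ck = Ck.map (F.der i) + Ck * B i) :
    ∀ Z : Matrix (Fin n) (Fin n) L, IsUnit Z →
      (((∀ j, (A j).map ⇑(F.σ k) * Z * Ck = (Z * Ck).map ⇑(F.φ j) * A j) ∧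
        (∀ i, (B i).map ⇑(F.σ k) * (Z * Ck) = (Z * Ck).map (F.der i) + Z * Ck * B i) ∧
        (∀ i : Fin r, (i : ℕ) < (k : ℕ) →
          (D i).map ⇑(F.σ k) * Z * Ck = (Z * Ck).map ⇑(F.σ i) * D i)) ↔
      ((∀ j, Z.map ⇑(F.φ j) = (A j).map ⇑(F.σ k) * Z * ((A j).map ⇑(F.σ k))⁻¹) ∧
        (∀ i, Z.map (F.der i) = (B i).map ⇑(F.σ k) * Z - Z * (B i).map ⇑(F.σ k)) ∧
        (∀ i : Fin r, (i : ℕ) < (k : ℕ) →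
          Z.map ⇑(F.σ i) =
            (D i).map ⇑(F.σ k) * Z * Ck * (D i)⁻¹ * (Ck.map ⇑(F.σ i))⁻¹))) := by
  intro Z hZ
  -- invertibility facts
  have hmapUnit : ∀ (e : L ≃+* L) (M : Matrix (Fin n) (Fin n) L), IsUnit M →
      IsUnit (M.map ⇑e) := by
    intro e M hM
    have := hM.map (e.toRingHom.mapMatrix (m := Fin n))
    simpa [RingHom.mapMatrix_apply] using this
  have hmapmul : ∀ (e : L ≃+* L) (X Y : Matrix (Fin n) (Fin n) L),
      (X * Y).map ⇑e = X.map ⇑e * Y.map ⇑e := by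
    intro e X Y
    exact Matrix.map_mul (f := e.toRingHom)
  constructor
  · rintro ⟨h1, h2, h3⟩
    refine ⟨?_, ?_, ?_⟩
    · intro j
      have hAσ := hmapUnit (F.σ k) (A j) (hA j)
      have key : (A j).map ⇑(F.σ k) * Z = Z.map ⇑(F.φ j) * (A j).map ⇑(F.σ k) := by
        rw [← aux_cancel_right hCk]
        calc (A j).map ⇑(F.σ k) * Z * Ck = (Z * Ck).map ⇑(F.φ j) * A j := h1 j
        _ = Z.map ⇑(F.φ j) * (Ck.map ⇑(F.φ j) * A j) := by
            rw [hmapmul]; rw [Matrix.mul_assoc]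
        _ = Z.map ⇑(F.φ j) * ((A j).map ⇑(F.σ k) * Ck) := by rw [hCkφ j]
        _ = Z.map ⇑(F.φ j) * (A j).map ⇑(F.σ k) * Ck := by rw [Matrix.mul_assoc]
      have hd := (Matrix.isUnit_iff_isUnit_det _).mp hAσ
      rw [key, Matrix.mul_nonsing_inv_cancel_right _ _ hd]
    · intro i
      have key : (B i).map ⇑(F.σ k) * Z = Z.map (F.der i) + Z * (B i).map ⇑(F.σ k) := by
        rw [← aux_cancel_right hCk]
        have e1 := h2 i
        rw [aux_map_der (F.der_add i) (F.der_mul i)] at e1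
        calc (B i).map ⇑(F.σ k) * Z * Ck = (B i).map ⇑(F.σ k) * (Z * Ck) := by
              rw [Matrix.mul_assoc]
        _ = Z.map (F.der i) * Ck + Z * (Ck.map (F.der i) + Ck * B i) := by
              rw [e1]; rw [Matrix.mul_add]
              rw [Matrix.mul_assoc]; abel
        _ = Z.map (F.der i) * Ck + Z * ((B i).map ⇑(F.σ k) * Ck) := by rw [hCkder i]
        _ = (Z.map (F.der i) + Z * (B i).map ⇑(F.σ k)) * Ck := by
              rw [Matrix.add_mul, Matrix.mul_assoc]
      rw [eq_sub_iff_add_eq, add_comm, key]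
      exact add_comm _ _
    · intro i hi
      have hDσ := hD i hi
      have hCσ := hmapUnit (F.σ i) Ck hCk
      have hdD := (Matrix.isUnit_iff_isUnit_det _).mp hDσ
      have hdC := (Matrix.isUnit_iff_isUnit_det _).mp hCσ
      have key := h3 i hi
      rw [hmapmul] at key
      rw [key, Matrix.mul_nonsing_inv_cancel_right _ _ hdD,
        Matrix.mul_nonsing_inv_cancel_right _ _ hdC]
  · rintro ⟨h1, h2, h3⟩
    refine ⟨?_, ?_, ?_⟩
    · intro j
      have hAσ := hmapUnit (F.σ k) (A j) (hA j)
      have hd := (Matrix.isUnit_iff_isUnit_det _).mp hAσ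
      rw [hmapmul, h1 j, Matrix.mul_assoc _ (Ck.map ⇑(F.φ j)) (A j), hCkφ j,
        ← Matrix.mul_assoc, Matrix.nonsing_inv_mul_cancel_right _ _ hd]
    · intro i
      have hc : Ck.map (F.der i) = (B i).map ⇑(F.σ k) * Ck - Ck * B i := by
        rw [eq_sub_iff_add_eq]; exact (hCkder i).symm
      rw [aux_map_der (F.der_add i) (F.der_mul i), h2 i, hc]
      noncomm_ring
    · intro i hi
      have hDσ := hD i hi
      have hCσ := hmapUnit (F.σ i) Ck hCk
      have hdD := (Matrix.isUnit_iff_isUnit_det _).mp hDσ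
      have hdC := (Matrix.isUnit_iff_isUnit_det _).mp hCσ
      rw [hmapmul, h3 i hi,
        Matrix.nonsing_inv_mul_cancel_right _ _ hdC,
        Matrix.nonsing_inv_mul_cancel_right _ _ hdD]
end
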